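/- Let k₁₂, k₂₁, k₂₃, k₃₂, k₃₁, k₁₃ ∈ ℝ and define the linear vector field v⁽⁰⁾ : ℝ³ → ℝ³ by v⁽⁰⁾₁(x) = −(k₁₂ − k₂₁)x₁ + (k₃₁ − k₁₃)x₃, v⁽⁰⁾₂(x) = −(k₂₃ − k₃₂)x₂ + (k₁₂ − k₂₁)x₁, v⁽⁰⁾₃(x) = −(k₃₁ − k₁₃)x₃ + (k₂₃ − k₃₂)x₂. Then there exist a ∈ ℝ³ and a symmetric 3 × 3 real matrix Q such that, with H₁(x) = ⟨a, x⟩, H₂(x) = ½|x|², and S(x) = ½⟨x, Q x⟩, one has v⁽⁰⁾(x) = ∇H₁(x) × ∇H₂(x) + ∇S(x) for all x ∈ ℝ³. In particular the detailed-balance-violating zeroth-order term of the triangular reaction admits a Nambu-plus-gradient decomposition with the geometric conserved quantity H₂ = ½(x₁² + x₂² + x₃²). -/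

import Mathlib

open Matrix

infixl:74 " ×₃ " => crossProduct

/-- Partial-derivative gradient of `f : ℝ³ → ℝ` at `x`. -/
noncomputable def grad (f : (Fin 3 → ℝ) → ℝ) (x : Fin 3 → ℝ) : Fin 3 → ℝ :=
  fun i => fderiv ℝ f x (Pi.single i 1)

/-!
The field `v⁽⁰⁾` is linear, `v⁽⁰⁾(x) = A x`. Split `A` into its symmetric part
`Q = ½ (A + Aᵀ)` and its skew part `½ (A - Aᵀ)`. The symmetric part is the gradient of
`S(x) = ½ ⟨x, Q x⟩`. On `ℝ³` a skew-symmetric matrix acts as `x ↦ a × x` for its axial vector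
`a`, and since `∇H₁ = a` and `∇H₂(x) = x`, this is the Nambu term `∇H₁ × ∇H₂`.
-/

theorem grad_eq_of_hasFDerivAt {f : (Fin 3 → ℝ) → ℝ} {L : (Fin 3 → ℝ) →L[ℝ] ℝ}
    {x : Fin 3 → ℝ} (h : HasFDerivAt f L x) : grad f x = fun i => L (Pi.single i 1) := by
  unfold grad
  rw [h.fderiv]

theorem grad_dotProduct (a x : Fin 3 → ℝ) : grad (fun y => a ⬝ᵥ y) x = a := by
  let L : (Fin 3 → ℝ) →L[ℝ] ℝ := LinearMap.toContinuousLinearMap (dotProductBilin ℝ ℝ a)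
  have hL : HasFDerivAt (fun y => a ⬝ᵥ y) L x := L.hasFDerivAt
  ext i
  simp [grad_eq_of_hasFDerivAt hL, L]

theorem grad_half_dotProduct_mulVec {Q : Matrix (Fin 3) (Fin 3) ℝ} (hQ : Q.IsSymm)
    (x : Fin 3 → ℝ) : grad (fun y => (1 / 2) * (y ⬝ᵥ Q *ᵥ y)) x = Q *ᵥ x := by
  let B : (Fin 3 → ℝ) →L[ℝ] (Fin 3 → ℝ) →L[ℝ] ℝ := (dotProductBilin ℝ ℝ).toContinuousBilinearMap
  let M : (Fin 3 → ℝ) →L[ℝ] (Fin 3 → ℝ) := LinearMap.toContinuousLinearMap Q.mulVecLin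
  have hS : HasFDerivAt (fun y => (1 / 2) * (y ⬝ᵥ Q *ᵥ y)) _ x :=
    (B.hasFDerivAt_of_bilinear (hasFDerivAt_id x) M.hasFDerivAt).const_mul (1 / 2)
  ext i
  have hcol : x ⬝ᵥ Q.col i = (Q *ᵥ x) i := by
    conv_rhs => rw [← hQ.eq, mulVec_transpose]
    rfl
  rw [grad_eq_of_hasFDerivAt hS]
  calc _ = 2⁻¹ * (x ⬝ᵥ Q.col i) + 2⁻¹ * (Q *ᵥ x) i := by simp [B, M]
    _ = (Q *ᵥ x) i := by rw [hcol]; ring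

theorem grad_half_dotProduct_self (x : Fin 3 → ℝ) :
    grad (fun y => (1 / 2) * (y ⬝ᵥ y)) x = x := by
  simpa only [one_mulVec] using grad_half_dotProduct_mulVec isSymm_one x

def skewVector {R : Type*} [CommRing R] (A : Matrix (Fin 3) (Fin 3) R) : Fin 3 → R :=
  ![A 2 1 - A 1 2, A 0 2 - A 2 0, A 1 0 - A 0 1]

theorem sub_transpose_mulVec_eq_skewVector_cross {R : Type*} [CommRing R]
    (A : Matrix (Fin 3) (Fin 3) R) (x : Fin 3 → R) : (A - Aᵀ) *ᵥ x = skewVector A ×₃ x := by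
  ext i
  fin_cases i <;>
    simp only [skewVector, cross_apply, mulVec, dotProduct, Fin.sum_univ_three, Matrix.sub_apply,
      transpose_apply, Fin.isValue, Fin.zero_eta, Fin.mk_one, Fin.reduceFinMk, cons_val] <;> ring

theorem mulVec_eq_cross_add_symm_mulVec {K : Type*} [Field K] [NeZero (2 : K)]
    (A : Matrix (Fin 3) (Fin 3) K) (x : Fin 3 → K) :
    A *ᵥ x = ((2 : K)⁻¹ • skewVector A) ×₃ x + ((2 : K)⁻¹ • (A + Aᵀ)) *ᵥ x := by
  have hA : A = (2 : K)⁻¹ • (A - Aᵀ) + (2 : K)⁻¹ • (A + Aᵀ) := by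
    rw [← smul_add, sub_add_add_cancel, ← two_smul K A, smul_smul, inv_mul_cancel₀ two_ne_zero,
      one_smul]
  conv_lhs => rw [hA]
  rw [add_mulVec, smul_mulVec, sub_transpose_mulVec_eq_skewVector_cross, map_smul,
    LinearMap.smul_apply]

theorem exists_nambu_add_grad_eq_mulVec (A : Matrix (Fin 3) (Fin 3) ℝ) :
    ∃ (a : Fin 3 → ℝ) (Q : Matrix (Fin 3) (Fin 3) ℝ), Q.IsSymm ∧
      ∀ x : Fin 3 → ℝ, A *ᵥ x =
        grad (fun y => a ⬝ᵥ y) x ×₃ grad (fun y => (1 / 2) * (y ⬝ᵥ y)) x +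
          grad (fun y => (1 / 2) * (y ⬝ᵥ Q *ᵥ y)) x := by
  have hQ : ((2 : ℝ)⁻¹ • (A + Aᵀ)).IsSymm := (isSymm_add_transpose_self A).smul _
  refine ⟨(2 : ℝ)⁻¹ • skewVector A, _, hQ, fun x => ?_⟩
  rw [grad_dotProduct, grad_half_dotProduct_self, grad_half_dotProduct_mulVec hQ]
  exact mulVec_eq_cross_add_symm_mulVec A x

/-- the zeroth-order (detailed-balance-violating) term `v⁽⁰⁾` of
the triangular reaction admits a Nambu-plus-gradient decomposition: there exist
`a ∈ ℝ³` and a symmetric matrix `Q` such that, with `H₁(x) = ⟨a, x⟩`,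
`H₂(x) = ½|x|²` and `S(x) = ½⟨x, Q x⟩`, one has
`v⁽⁰⁾(x) = ∇H₁(x) × ∇H₂(x) + ∇S(x)` for all `x`; in particular the geometric
conserved quantity is `H₂ = ½(x₁² + x₂² + x₃²)`. -/
theorem triangular_zeroth_order_nambu_decomposition
    (k₁₂ k₂₁ k₂₃ k₃₂ k₃₁ k₁₃ : ℝ) :
    ∃ (a : Fin 3 → ℝ) (Q : Matrix (Fin 3) (Fin 3) ℝ), Q.IsSymm ∧
      ∀ x : Fin 3 → ℝ,
        (![-(k₁₂ - k₂₁) * x 0 + (k₃₁ - k₁₃) * x 2,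
           -(k₂₃ - k₃₂) * x 1 + (k₁₂ - k₂₁) * x 0,
           -(k₃₁ - k₁₃) * x 2 + (k₂₃ - k₃₂) * x 1] : Fin 3 → ℝ) =
          grad (fun y => a ⬝ᵥ y) x ×₃ grad (fun y => (1 / 2) * (y ⬝ᵥ y)) x +
            grad (fun y => (1 / 2) * (y ⬝ᵥ Q.mulVec y)) x := by
  obtain ⟨a, Q, hQ, hdecomp⟩ := exists_nambu_add_grad_eq_mulVec
    !![-(k₁₂ - k₂₁), 0, k₃₁ - k₁₃; k₁₂ - k₂₁, -(k₂₃ - k₃₂), 0; 0, k₂₃ - k₃₂, -(k₃₁ - k₁₃)]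
  refine ⟨a, Q, hQ, fun x => Eq.trans ?_ (hdecomp x)⟩
  ext i
  fin_cases i <;>
    simp only [mulVec, dotProduct, Fin.sum_univ_three, of_apply, Fin.isValue, Fin.zero_eta,
      Fin.mk_one, Fin.reduceFinMk, cons_val] <;> ring
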